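/- arXiv:2402.11531 — 3 statements merged into one kernel-verified Lean document; each statement's English description precedes it below -/
import Mathlib

section
/- If B is a bramble of a graph G of order r (i.e., every hitting set of B has size at least r), then every tree decomposition of G has width at least r − 1; consequently the maximum bramble order is at most tw(G) + 1. -/
open SimpleGraph

/-- `B : T → Set V` together with a tree `Tr` forms a tree decomposition of `G`. -/
def IsTreeDecomp {V T : Type} (G : SimpleGraph V) (Tr : SimpleGraph T) (B : T → Set V) : Prop :=
  Tr.Connected ∧ Tr.IsAcyclic ∧
  (∀ v : V, ∃ t : T, v ∈ B t) ∧
  (∀ u v : V, G.Adj u v → ∃ t : T, u ∈ B t ∧ v ∈ B t) ∧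
  (∀ v : V, (Tr.induce {t : T | v ∈ B t}).Connected)

/-- `G` has a tree decomposition of width at most `w` (all bags of size at most `w + 1`). -/
def TreewidthLE {V : Type} (G : SimpleGraph V) (w : ℕ) : Prop :=
  ∃ (T : Type) (Tr : SimpleGraph T) (B : T → Finset V),
    IsTreeDecomp G Tr (fun t => (B t : Set V)) ∧ ∀ t : T, (B t).card ≤ w + 1

/-- The tree-width of `G`: the least width of a tree decomposition of `G`. -/
noncomputable def treewidth {V : Type} (G : SimpleGraph V) : ℕ :=
  sInf {w : ℕ | TreewidthLE G w}

/-- `B` is a bramble of `G`: a family of nonempty connected vertex subsets any two of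
which touch (intersect or are joined by an edge). -/
def IsBramble {V : Type} (G : SimpleGraph V) (B : Set (Set V)) : Prop :=
  (∀ S ∈ B, S.Nonempty ∧ (G.induce S).Connected) ∧
  (∀ S ∈ B, ∀ T ∈ B, (S ∩ T).Nonempty ∨ ∃ a ∈ S, ∃ b ∈ T, G.Adj a b)

/-!
For a connected vertex set `S`, the nodes of the decomposition tree whose bags meet `S` form a
subtree, and two touching sets give intersecting subtrees. Subtrees of a tree have the Helly
property, so the finitely many subtrees coming from a bramble share a node; its bag is a hitting
set, hence has at least `r` vertices.
-/

namespace SimpleGraph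

variable {V : Type} {G : SimpleGraph V}

lemma IsAcyclic.mem_of_mem_support_of_preconnected_induce (hG : G.IsAcyclic) {X : Set V}
    (hX : (G.induce X).Preconnected) {a b : V} (ha : a ∈ X) (hb : b ∈ X) {p : G.Walk a b}
    (hp : p.IsPath) : ∀ v ∈ p.support, v ∈ X := by
  classical
  obtain ⟨q⟩ := hX ⟨a, ha⟩ ⟨b, hb⟩
  have hw : ∀ v ∈ (q.map (Embedding.induce X).toHom).support, v ∈ X := by
    intro v hv
    rw [Walk.support_map, List.mem_map] at hv
    obtain ⟨u, -, rfl⟩ := hv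
    exact u.2
  have hpw : p = (q.map (Embedding.induce X).toHom).bypass :=
    congrArg Subtype.val ((hG.subsingleton_path a b).elim ⟨p, hp⟩ ⟨_, Walk.bypass_isPath _⟩)
  exact hpw ▸ fun v hv => hw v (Walk.support_bypass_subset_support _ hv)

lemma IsTree.sInter_inter_nonempty (hG : G.IsTree) {F : Set (Set V)} {Y : Set V}
    (hF : ∀ X ∈ F, (G.induce X).Preconnected) (hY : (G.induce Y).Preconnected)
    (hFY : ∀ X ∈ F, (X ∩ Y).Nonempty) (hI : (⋂₀ F).Nonempty) (hYne : Y.Nonempty) :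
    (⋂₀ F ∩ Y).Nonempty := by
  classical
  obtain ⟨i, hi⟩ := hI
  obtain ⟨y, hy⟩ := hYne
  obtain ⟨p, hp⟩ := hG.connected.preconnected.exists_isPath i y
  induction p with
  | nil => exact ⟨_, hi, hy⟩
  | @cons i i' y hadj q ih =>
    by_cases hiY : i ∈ Y
    · exact ⟨i, hi, hiY⟩
    rw [Walk.cons_isPath_iff] at hp
    -- Every `X ∈ F` contains `i` and meets `Y`; the path from `i` into `X ∩ Y` must leave `i`
    -- through `i'`, since the route on through `q` and then inside `Y` avoids `i`.
    refine ih ?_ hy hp.1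
    intro X hX
    obtain ⟨z, hzX, hzY⟩ := hFY X hX
    obtain ⟨r, hr⟩ := hG.connected.preconnected.exists_isPath y z
    have hir : i ∉ r.support := fun h =>
      hiY (hG.isAcyclic.mem_of_mem_support_of_preconnected_induce hY hy hzY hr i h)
    have hiP : i ∉ (q.append r).bypass.support := fun h => by
      rcases (Walk.mem_support_append_iff _ _).mp ((q.append r).support_bypass_subset_support h)
        with h | h
      exacts [hp.2 h, hir h]
    exact hG.isAcyclic.mem_of_mem_support_of_preconnected_induce (hF X hX) (hi X hX) hzX
      ((Walk.cons_isPath_iff hadj _).mpr ⟨(q.append r).bypass_isPath, hiP⟩) i' (by simp)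

theorem IsTree.sInter_nonempty (hG : G.IsTree) {F : Set (Set V)} (hfin : F.Finite)
    (hF : ∀ X ∈ F, (G.induce X).Connected) (hpair : ∀ X ∈ F, ∀ Y ∈ F, (X ∩ Y).Nonempty) :
    (⋂₀ F).Nonempty := by
  induction F, hfin using Set.Finite.induction_on with
  | empty =>
    have := hG.connected.nonempty
    simp
  | @insert Y F _ _ ih =>
    have hFY : ∀ X ∈ F, (X ∩ Y).Nonempty := fun X hX =>
      hpair X (Set.mem_insert_of_mem _ hX) Y (Set.mem_insert _ _)
    rw [Set.sInter_insert, Set.inter_comm]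
    exact hG.sInter_inter_nonempty (fun X hX => (hF X (Set.mem_insert_of_mem _ hX)).preconnected)
      (hF Y (Set.mem_insert _ _)).preconnected hFY
      (ih (fun X hX => hF X (Set.mem_insert_of_mem _ hX))
        (fun X hX Z hZ => hpair X (Set.mem_insert_of_mem _ hX) Z (Set.mem_insert_of_mem _ hZ)))
      (Set.nonempty_coe_sort.mp (hF Y (Set.mem_insert _ _)).nonempty)

end SimpleGraph

open SimpleGraph

section TreeDecomposition

variable {V T : Type} {G : SimpleGraph V} {Tr : SimpleGraph T} {bag : T → Set V}

lemma IsTreeDecomp.connected_induce_trace (htd : IsTreeDecomp G Tr bag) {S : Set V}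
    (hS : (G.induce S).Connected) : (Tr.induce {t | (S ∩ bag t).Nonempty}).Connected := by
  obtain ⟨-, -, hcover, hedge, hcoh⟩ := htd
  have hsub : ∀ v ∈ S, {t | v ∈ bag t} ⊆ {t | (S ∩ bag t).Nonempty} :=
    fun v hv _ ht => ⟨v, hv, ht⟩
  have hreach : ∀ (x y : S) (_ : (G.induce S).Walk x y) (s₁ s₂ : T) (h₁ : (x : V) ∈ bag s₁)
      (h₂ : (y : V) ∈ bag s₂), (Tr.induce {t | (S ∩ bag t).Nonempty}).Reachable
        ⟨s₁, x, x.2, h₁⟩ ⟨s₂, y, y.2, h₂⟩ := by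
    intro x y p
    induction p with
    | nil =>
      intro s₁ s₂ h₁ h₂
      exact ((hcoh _).preconnected ⟨s₁, h₁⟩ ⟨s₂, h₂⟩).map
        (induceHomOfLE Tr (hsub _ (Subtype.prop _))).toHom
    | @cons x x' y hadj q ih =>
      intro s₁ s₂ h₁ h₂
      obtain ⟨t, hxt, hx't⟩ := hedge _ _ hadj
      exact (((hcoh _).preconnected ⟨s₁, h₁⟩ ⟨t, hxt⟩).map
        (induceHomOfLE Tr (hsub _ x.2)).toHom).trans (ih t s₂ hx't h₂)
  obtain ⟨v, hv⟩ := Set.nonempty_coe_sort.mp hS.nonempty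
  obtain ⟨t, ht⟩ := hcover v
  refine (connected_iff _).mpr ⟨?_, ⟨t, v, hv, ht⟩⟩
  rintro ⟨s₁, v₁, hv₁, h₁⟩ ⟨s₂, v₂, hv₂, h₂⟩
  obtain ⟨p⟩ := hS.preconnected ⟨v₁, hv₁⟩ ⟨v₂, hv₂⟩
  exact hreach _ _ p s₁ s₂ h₁ h₂

lemma IsTreeDecomp.inter_trace_nonempty (htd : IsTreeDecomp G Tr bag) {S S' : Set V}
    (h : (S ∩ S').Nonempty ∨ ∃ a ∈ S, ∃ b ∈ S', G.Adj a b) :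
    ({t | (S ∩ bag t).Nonempty} ∩ {t | (S' ∩ bag t).Nonempty}).Nonempty := by
  obtain ⟨-, -, hcover, hedge, -⟩ := htd
  rcases h with ⟨v, hv, hv'⟩ | ⟨a, ha, b, hb, hab⟩
  · obtain ⟨t, ht⟩ := hcover v
    exact ⟨t, ⟨v, hv, ht⟩, ⟨v, hv', ht⟩⟩
  · obtain ⟨t, hat, hbt⟩ := hedge a b hab
    exact ⟨t, ⟨a, ha, hat⟩, ⟨b, hb, hbt⟩⟩

lemma IsBramble.exists_bag_meets_all {B : Set (Set V)} (hB : IsBramble G B) (hfin : B.Finite)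
    (htd : IsTreeDecomp G Tr bag) : ∃ t, ∀ S ∈ B, (S ∩ bag t).Nonempty := by
  have hTr : Tr.IsTree := ⟨htd.1, htd.2.1⟩
  obtain ⟨t, ht⟩ := hTr.sInter_nonempty (F := (fun S => {t | (S ∩ bag t).Nonempty}) '' B)
    (hfin.image _) (by rintro _ ⟨S, hS, rfl⟩; exact htd.connected_induce_trace (hB.1 S hS).2)
    (by rintro _ ⟨S, hS, rfl⟩ _ ⟨S', hS', rfl⟩; exact htd.inter_trace_nonempty (hB.2 S hS S' hS'))
  exact ⟨t, fun S hS => ht _ ⟨S, hS, rfl⟩⟩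

end TreeDecomposition

lemma treewidthLE_card {V : Type} [Fintype V] (G : SimpleGraph V) :
    TreewidthLE G (Fintype.card V) := by
  refine ⟨Unit, ⊥, fun _ => Finset.univ, ⟨Connected.of_subsingleton, isAcyclic_bot,
    fun _ => ⟨(), by simp⟩, fun _ _ _ => ⟨(), by simp, by simp⟩, fun v => ?_⟩, fun _ => by simp⟩
  have : Nonempty {t : Unit | v ∈ (Finset.univ : Finset V)} := ⟨⟨(), by simp⟩⟩
  exact Connected.of_subsingleton

lemma treewidthLE_treewidth {V : Type} [Fintype V] (G : SimpleGraph V) :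
    TreewidthLE G (treewidth G) :=
  Nat.sInf_mem (s := {w | TreewidthLE G w}) ⟨_, treewidthLE_card G⟩

/-- If `B` is a bramble of order at least `r` (every hitting set has size at least `r`),
then every tree decomposition of `G` has width at least `r - 1`; consequently
`r ≤ tw(G) + 1`. -/
theorem stmt6 {V : Type} [Fintype V] (G : SimpleGraph V) (B : Set (Set V)) (r : ℕ)
    (hB : IsBramble G B)
    (hord : ∀ H : Finset V, (∀ S ∈ B, ∃ x ∈ H, x ∈ S) → r ≤ H.card) :
    (∀ w : ℕ, TreewidthLE G w → r ≤ w + 1) ∧ r ≤ treewidth G + 1 := by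
  have hwidth : ∀ w : ℕ, TreewidthLE G w → r ≤ w + 1 := by
    rintro w ⟨T, Tr, bag, htd, hcard⟩
    obtain ⟨t, ht⟩ := hB.exists_bag_meets_all (Set.toFinite B) htd
    have hhit : ∀ S ∈ B, ∃ x ∈ bag t, x ∈ S := fun S hS =>
      (ht S hS).elim fun x hx => ⟨x, hx.2, hx.1⟩
    exact (hord (bag t) hhit).trans (hcard t)
  exact ⟨hwidth, hwidth _ (treewidthLE_treewidth G)⟩
end

section
/- For every base graph G and functions f, g : E(G) → F_2, the CFI-graphs CFI(G,f) and CFI(G,g) are isomorphic if and only if the sums Σ_{e} f(e) and Σ_{e} g(e) over all edges agree in F_2. -/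
/-!
A color-preserving isomorphism `CFI(G, f) ≅ CFI(G, g)` maps every gadget to itself and acts on
each outer pair `(v, u, ·)` by a translation `i ↦ i + y v u`. Compatibility with the edges
forces `y v u + y u v = f {v, u} + g {v, u}`, and the inner vertex `(v, 0)` must go to `(v, y v)`,
so every row `y v` has even weight. Conversely such a `y` (a balanced split of `f + g`) yields an
isomorphism by translating all labels. Summing all `y v u` shows that a balanced split of `d`
forces `∑ₑ d e = 0`. On a connected graph the converse holds: take any split of `d` and correct
its row sums, which add up to `∑ₑ d e = 0`, by a symmetric edge function with exactly these row
sums; it exists because `1_a + 1_b` is the boundary of a walk from `a` to `b`.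
-/

open SimpleGraph

variable {V : Type} [Fintype V] [DecidableEq V]

/-- Vertices of the CFI-graph over base graph `G`: inner vertices `(v, x)` with
`x : V → ZMod 2` supported on the neighbors of `v` and of even weight, and outer
vertices `(v, u, i)` for edges `vu` of `G` and `i ∈ F₂`. -/
def CFIVert (G : SimpleGraph V) : Type :=
  {p : V × (V → ZMod 2) // (∀ u : V, ¬ G.Adj p.1 u → p.2 u = 0) ∧ ∑ u : V, p.2 u = 0} ⊕
  {p : V × V × ZMod 2 // G.Adj p.1 p.2.1}

/-- The CFI-graph `CFI(G, f)`: inner vertex `(v, x)` is adjacent to outer vertex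
`(v, u, i)` iff `x u = i`, and outer vertices `(v, u, i)` and `(u, v, j)` are adjacent
iff `i + j = f {u, v}`. -/
def CFIGraph (G : SimpleGraph V) (f : Sym2 V → ZMod 2) : SimpleGraph (CFIVert G) :=
  SimpleGraph.fromRel (fun a b =>
    match a, b with
    | Sum.inl x, Sum.inr p => x.val.1 = p.val.1 ∧ x.val.2 p.val.2.1 = p.val.2.2
    | Sum.inr p, Sum.inr q =>
        q.val.1 = p.val.2.1 ∧ q.val.2.1 = p.val.1 ∧
          p.val.2.2 + q.val.2.2 = f s(p.val.1, q.val.1)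
    | _, _ => False)

/-- The vertex-coloring of the CFI-graph: the inner vertices of the gadget of `v` form one
color class, and each outer pair `{(v, u, 0), (v, u, 1)}` forms one color class. -/
def CFIColor (G : SimpleGraph V) : CFIVert G → V ⊕ (V × V)
  | Sum.inl x => Sum.inl x.val.1
  | Sum.inr p => Sum.inr (p.val.1, p.val.2.1)

open Finset

lemma sum_sum_eq_sum_edgeFinset {α M : Type*} [Fintype α] [AddCommMonoid M]
    (G : SimpleGraph α) [DecidableRel G.Adj] {y : α → α → M} {d : Sym2 α → M}
    (hsupp : ∀ v u, ¬ G.Adj v u → y v u = 0)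
    (hd : ∀ v u, G.Adj v u → y v u + y u v = d s(v, u)) :
    ∑ v, ∑ u, y v u = ∑ e ∈ G.edgeFinset, d e := by
  classical
  calc ∑ v, ∑ u, y v u = ∑ p : α × α, y p.1 p.2 := (Fintype.sum_prod_type' _).symm
    _ = ∑ p : α × α with G.Adj p.1 p.2, y p.1 p.2 :=
        (sum_filter_of_ne fun p _ hp => not_not.1 (mt (hsupp p.1 p.2) hp)).symm
    _ = ∑ x : G.Dart, y x.fst x.snd :=
        sum_bij' (fun p h => (⟨p, (mem_filter.1 h).2⟩ : G.Dart)) (fun x _ => (x.fst, x.snd))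
          (by simp) (by simp) (by simp) (by simp) (by simp)
    _ = ∑ e ∈ G.edgeFinset, ∑ x : G.Dart with x.edge = e, y x.fst x.snd :=
        (sum_fiberwise_of_maps_to (fun x _ => G.mem_edgeFinset.2 x.edge_mem) _).symm
    _ = ∑ e ∈ G.edgeFinset, d e := sum_congr rfl fun e he => by
        induction e with
        | _ v u =>
          let x : G.Dart := ⟨(v, u), G.mem_edgeFinset.1 he⟩
          rw [show s(v, u) = x.edge from rfl, x.edge_fiber, sum_pair x.symm_ne.symm]
          exact hd v u x.adj

lemma exists_add_swap_eq {α M : Type*} [AddCommMonoid M] (G : SimpleGraph α) (d : Sym2 α → M) :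
    ∃ y : α → α → M, (∀ v u, ¬ G.Adj v u → y v u = 0) ∧
      ∀ v u, G.Adj v u → y v u + y u v = d s(v, u) := by
  classical
  refine ⟨fun v u => if G.Adj v u ∧ s(v, u).out = (v, u) then d s(v, u) else 0,
    fun v u h => if_neg (not_and_of_not_left _ h), fun v u h => ?_⟩
  have hout : s(v, u).out = (v, u) ∨ s(v, u).out = (u, v) :=
    Sym2.mk_eq_mk_iff.1 (Quot.out_eq s(v, u))
  have hvu : (v, u) ≠ (u, v) := fun h' => G.ne_of_adj h (Prod.ext_iff.1 h').1
  rcases hout with hout | hout <;> simp [h, h.symm, hout, hvu, hvu.symm, Sym2.eq_swap (a := u)]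

section

variable {V : Type} [Fintype V] {G : SimpleGraph V} {f g : Sym2 V → ZMod 2}

-- `b` encodes an edge set of `G` and `c` is its boundary, the set of its odd-degree vertices.
variable (G) in
def boundarySpace : Submodule (ZMod 2) (V → ZMod 2) where
  carrier := {c | ∃ b : V → V → ZMod 2, (∀ v u, ¬ G.Adj v u → b v u = 0) ∧
    (∀ v u, b v u = b u v) ∧ ∀ v, ∑ u, b v u = c v}
  add_mem' := by
    rintro _ _ ⟨b, hb, hbs, hrow⟩ ⟨b', hb', hbs', hrow'⟩
    exact ⟨b + b', fun v u h => by simp [hb v u h, hb' v u h], fun v u => by simp [hbs, hbs'],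
      fun v => by simp [sum_add_distrib, hrow, hrow']⟩
  zero_mem' := ⟨0, fun _ _ _ => rfl, fun _ _ => rfl, fun _ => by simp⟩
  smul_mem' := by
    rintro k _ ⟨b, hb, hbs, hrow⟩
    exact ⟨k • b, fun v u h => by simp [hb v u h], fun v u => by simp [hbs],
      fun v => by simp [← mul_sum, hrow]⟩

lemma single_add_single_mem_boundarySpace_of_adj [DecidableEq V] {a b : V} (h : G.Adj a b) :
    Pi.single a 1 + Pi.single b 1 ∈ boundarySpace G := by
  refine ⟨fun v u => if s(v, u) = s(a, b) then 1 else 0, fun v u hvu => if_neg ?_,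
    fun v u => by simp only [Sym2.eq_swap], fun v => ?_⟩
  · rintro hs
    exact hvu (G.mem_edgeSet.1 (hs ▸ G.mem_edgeSet.2 h))
  · have hab := G.ne_of_adj h
    by_cases hva : v = a <;> by_cases hvb : v = b <;> subst_vars <;>
      simp_all [eq_comm]

lemma single_add_single_mem_boundarySpace_of_reachable [DecidableEq V] {a b : V}
    (h : G.Reachable a b) :
    Pi.single a 1 + Pi.single b 1 ∈ boundarySpace G := by
  obtain ⟨w⟩ := h
  induction w with
  | nil => simpa only [ZModModule.add_self] using (boundarySpace G).zero_mem
  | @cons a b c h _ ih =>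
    convert add_mem (single_add_single_mem_boundarySpace_of_adj h) ih using 1
    rw [add_assoc, ← add_assoc (Pi.single b 1), ZModModule.add_self, zero_add]

lemma mem_boundarySpace_of_sum_eq_zero [DecidableEq V] (hconn : G.Connected) {c : V → ZMod 2}
    (hc : ∑ v, c v = 0) : c ∈ boundarySpace G := by
  obtain ⟨r⟩ := hconn.nonempty
  have : c = ∑ v, c v • (Pi.single v 1 + Pi.single r 1) := by
    simp only [smul_add, sum_add_distrib, ← sum_smul, hc, zero_smul, add_zero]
    ext w
    simp [Finset.sum_apply, Pi.single_apply]
  rw [this]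
  exact sum_mem fun v _ => Submodule.smul_mem _ _
    (single_add_single_mem_boundarySpace_of_reachable (hconn.preconnected v r))

structure IsBalancedSplit {M : Type*} [AddCommMonoid M] (G : SimpleGraph V) (d : Sym2 V → M)
    (y : V → V → M) : Prop where
  supported : ∀ v u, ¬ G.Adj v u → y v u = 0
  rowSum_eq_zero : ∀ v, ∑ u, y v u = 0
  add_swap : ∀ v u, G.Adj v u → y v u + y u v = d s(v, u)

lemma IsBalancedSplit.sum_edgeFinset_eq_zero {M : Type*} [AddCommMonoid M] [DecidableRel G.Adj]
    {d : Sym2 V → M} {y : V → V → M} (hy : IsBalancedSplit G d y) :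
    ∑ e ∈ G.edgeFinset, d e = 0 := by
  rw [← sum_sum_eq_sum_edgeFinset G hy.supported hy.add_swap]
  exact sum_eq_zero fun v _ => hy.rowSum_eq_zero v

lemma exists_isBalancedSplit [DecidableRel G.Adj] (hconn : G.Connected) {d : Sym2 V → ZMod 2}
    (hd : ∑ e ∈ G.edgeFinset, d e = 0) : ∃ y, IsBalancedSplit G d y := by
  classical
  obtain ⟨y₀, hy₀, hy₀d⟩ := exists_add_swap_eq G d
  obtain ⟨b, hb, hbs, hbrow⟩ := mem_boundarySpace_of_sum_eq_zero hconn
    (c := fun v => ∑ u, y₀ v u) (by rw [sum_sum_eq_sum_edgeFinset G hy₀ hy₀d, hd])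
  refine ⟨y₀ + b, ⟨fun v u h => by simp [hy₀ v u h, hb v u h],
    fun v => by simp [sum_add_distrib, hbrow, ZModModule.add_self], fun v u h => ?_⟩⟩
  calc y₀ v u + b v u + (y₀ u v + b u v) = (y₀ v u + y₀ u v) + (b v u + b v u) := by
        rw [hbs u v]; abel
    _ = d s(v, u) := by rw [hy₀d v u h, ZModModule.add_self, add_zero]

lemma cfiGraph_adj_inl_inr {v w u : V} {x : V → ZMod 2} {i : ZMod 2} {hx h} :
    (CFIGraph G f).Adj (.inl ⟨(v, x), hx⟩) (.inr ⟨(w, u, i), h⟩) ↔ v = w ∧ x u = i := by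
  refine (fromRel_adj _ _ _).trans ⟨fun h => ?_, fun h => ⟨Sum.inl_ne_inr, Or.inl h⟩⟩
  obtain ⟨-, h | h⟩ := h
  exacts [h, h.elim]

lemma cfiGraph_adj_inr_inr {v u w t : V} {i j : ZMod 2} {h h'} :
    (CFIGraph G f).Adj (.inr ⟨(v, u, i), h⟩) (.inr ⟨(w, t, j), h'⟩) ↔
      w = u ∧ t = v ∧ i + j = f s(v, w) := by
  refine (fromRel_adj _ _ _).trans ⟨?_, fun hr => ⟨fun hpq => ?_, Or.inl hr⟩⟩
  · rintro ⟨-, hr | ⟨h₁, h₂, h₃⟩⟩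
    · exact hr
    · exact ⟨h₂.symm, h₁.symm, by rwa [add_comm, Sym2.eq_swap]⟩
  · cases hpq
    exact G.ne_of_adj h hr.2.1.symm

lemma cfiGraph_not_adj_inl_inl {v w : V} {x x' : V → ZMod 2} {hx hx'} :
    ¬ (CFIGraph G f).Adj (.inl ⟨(v, x), hx⟩) (.inl ⟨(w, x'), hx'⟩) := fun h => by
  obtain ⟨-, h | h⟩ := (fromRel_adj _ _ _).1 h <;> exact h

lemma exists_eq_inl_of_cfiColor_eq {v : V} {a : CFIVert G} (ha : CFIColor G a = .inl v) :
    ∃ x hx, a = .inl ⟨(v, x), hx⟩ := by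
  rcases a with ⟨⟨v', x⟩, hx⟩ | _
  · obtain rfl : v' = v := Sum.inl_injective ha
    exact ⟨x, hx, rfl⟩
  · exact (Sum.inr_ne_inl ha).elim

lemma exists_eq_inr_of_cfiColor_eq {v u : V} (h : G.Adj v u) {a : CFIVert G}
    (ha : CFIColor G a = .inr (v, u)) : ∃ j, a = .inr ⟨(v, u, j), h⟩ := by
  rcases a with _ | ⟨⟨v', u', j⟩, h'⟩
  · exact (Sum.inl_ne_inr ha).elim
  · obtain ⟨rfl, rfl⟩ := Prod.ext_iff.1 (Sum.inr_injective ha)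
    exact ⟨j, rfl⟩

lemma ZMod.apply_eq_add_apply_zero_of_injective {F : ZMod 2 → ZMod 2} (hF : Function.Injective F)
    (i : ZMod 2) : F i = i + F 0 := by
  revert F i
  decide

variable (G) in
def IsOuterShift (φ : CFIVert G → CFIVert G) (y : V → V → ZMod 2) : Prop :=
  ∀ v u (h : G.Adj v u) i, φ (.inr ⟨(v, u, i), h⟩) = .inr ⟨(v, u, i + y v u), h⟩

lemma exists_isOuterShift {φ : CFIVert G → CFIVert G} (hφ : Function.Injective φ)
    (hcol : ∀ a, CFIColor G (φ a) = CFIColor G a) :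
    ∃ y, (∀ v u, ¬ G.Adj v u → y v u = 0) ∧ IsOuterShift G φ y := by
  classical
  choose F hF using fun v u (h : G.Adj v u) i =>
    exists_eq_inr_of_cfiColor_eq h (hcol (.inr ⟨(v, u, i), h⟩))
  have hFinj : ∀ v u h, Function.Injective (F v u h) := fun v u h i i' hi => by
    have := Sum.inr_injective (hφ ((hF v u h i).trans (hi ▸ (hF v u h i').symm)))
    exact congrArg (fun p : {p : V × V × ZMod 2 // G.Adj p.1 p.2.1} => p.1.2.2) this
  refine ⟨fun v u => if h : G.Adj v u then F v u h 0 else 0, fun v u h => dif_neg h,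
    fun v u h i => ?_⟩
  refine (hF v u h i).trans (congrArg (fun j => (.inr ⟨(v, u, j), h⟩ : CFIVert G)) ?_)
  simpa only [dif_pos h] using ZMod.apply_eq_add_apply_zero_of_injective (hFinj v u h) i

section OuterShift

variable {φ : CFIGraph G f →g CFIGraph G g} {y : V → V → ZMod 2}

lemma IsOuterShift.add_swap_eq (hy : IsOuterShift G φ y) {v u : V} (h : G.Adj v u) :
    y v u + y u v = f s(v, u) + g s(v, u) := by
  have hadj : (CFIGraph G f).Adj (.inr ⟨(v, u, 0), h⟩) (.inr ⟨(u, v, f s(v, u)), h.symm⟩) :=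
    cfiGraph_adj_inr_inr.2 ⟨rfl, rfl, zero_add _⟩
  have := φ.map_adj hadj
  rw [hy, hy, cfiGraph_adj_inr_inr] at this
  grind

lemma IsOuterShift.rowSum_eq_zero (hy : IsOuterShift G φ y)
    (hcol : ∀ a, CFIColor G (φ a) = CFIColor G a) (hsupp : ∀ v u, ¬ G.Adj v u → y v u = 0)
    (v : V) : ∑ u, y v u = 0 := by
  let x₀ : CFIVert G := .inl ⟨(v, 0), fun _ _ => rfl, by simp⟩
  obtain ⟨x, hx, hφx⟩ := exists_eq_inl_of_cfiColor_eq (v := v) (hcol x₀)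
  suffices x = y v from this ▸ hx.2
  funext u
  by_cases h : G.Adj v u
  · have hadj : (CFIGraph G f).Adj x₀ (.inr ⟨(v, u, 0), h⟩) :=
      cfiGraph_adj_inl_inr.2 ⟨rfl, rfl⟩
    have := φ.map_adj hadj
    rw [hφx, hy, cfiGraph_adj_inl_inr, zero_add] at this
    exact this.2
  · exact (hx.1 u h).trans (hsupp v u h).symm

end OuterShift

lemma exists_isBalancedSplit_of_iso (φ : CFIGraph G f ≃g CFIGraph G g)
    (hcol : ∀ a, CFIColor G (φ a) = CFIColor G a) : ∃ y, IsBalancedSplit G (f + g) y := by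
  obtain ⟨y, hsupp, hy⟩ := exists_isOuterShift φ.injective hcol
  exact ⟨y, hsupp, IsOuterShift.rowSum_eq_zero (φ := φ.toHom) hy hcol hsupp,
    fun v u h => IsOuterShift.add_swap_eq (φ := φ.toHom) hy h⟩

def IsBalancedSplit.twist {d : Sym2 V → ZMod 2} {y : V → V → ZMod 2}
    (hy : IsBalancedSplit G d y) : CFIVert G → CFIVert G
  | .inl ⟨(v, x), hx⟩ => .inl ⟨(v, x + y v), fun u hu => by
      simpa [hy.supported v u hu] using hx.1 u hu,
      by simp [sum_add_distrib, hx.2, hy.rowSum_eq_zero v]⟩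
  | .inr ⟨(v, u, i), h⟩ => .inr ⟨(v, u, i + y v u), h⟩

namespace IsBalancedSplit

variable {d : Sym2 V → ZMod 2} {y : V → V → ZMod 2}

lemma twist_involutive (hy : IsBalancedSplit G d y) : Function.Involutive hy.twist := by
  rintro (⟨⟨v, x⟩, hx⟩ | ⟨⟨v, u, i⟩, h⟩) <;>
    simp only [twist, add_assoc, ZModModule.add_self, add_zero] <;> rfl

lemma cfiColor_twist (hy : IsBalancedSplit G d y) (a : CFIVert G) :
    CFIColor G (hy.twist a) = CFIColor G a := by
  rcases a with ⟨⟨v, x⟩, hx⟩ | ⟨⟨v, u, i⟩, h⟩ <;> rfl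

lemma cfiGraph_adj_twist_iff (hy : IsBalancedSplit G (f + g) y) (a b : CFIVert G) :
    (CFIGraph G g).Adj (hy.twist a) (hy.twist b) ↔ (CFIGraph G f).Adj a b := by
  have inner_outer : ∀ v x hx w u i h,
      (CFIGraph G g).Adj (hy.twist (.inl ⟨(v, x), hx⟩)) (hy.twist (.inr ⟨(w, u, i), h⟩)) ↔
        (CFIGraph G f).Adj (.inl ⟨(v, x), hx⟩) (.inr ⟨(w, u, i), h⟩) := by
    intro v x hx w u i h
    refine cfiGraph_adj_inl_inr.trans (Iff.trans ?_ cfiGraph_adj_inl_inr.symm)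
    exact and_congr_right fun hvw => by subst hvw; simp
  rcases a with ⟨⟨v, x⟩, hx⟩ | ⟨⟨v, u, i⟩, h⟩ <;>
    rcases b with ⟨⟨w, x'⟩, hx'⟩ | ⟨⟨w, t, j⟩, h'⟩
  · exact iff_of_false cfiGraph_not_adj_inl_inl cfiGraph_not_adj_inl_inl
  · exact inner_outer ..
  · exact (adj_comm _ _ _).trans ((inner_outer ..).trans (adj_comm _ _ _))
  · refine cfiGraph_adj_inr_inr.trans (Iff.trans ?_ cfiGraph_adj_inr_inr.symm)
    have hsplit := hy.add_swap v u h
    simp only [Pi.add_apply] at hsplit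
    constructor <;> rintro ⟨rfl, rfl, hij⟩ <;> exact ⟨rfl, rfl, by grind⟩

def cfiIso (hy : IsBalancedSplit G (f + g) y) : CFIGraph G f ≃g CFIGraph G g where
  toEquiv := hy.twist_involutive.toPerm
  map_rel_iff' := hy.cfiGraph_adj_twist_iff _ _

end IsBalancedSplit

end

/-- For a connected base graph `G`, the colored CFI-graphs `CFI(G, f)` and `CFI(G, g)` are
isomorphic if and only if `Σ_e f e = Σ_e g e` in `F₂`. -/
theorem stmt9 (G : SimpleGraph V) [DecidableRel G.Adj] (hconn : G.Connected)
    (f g : Sym2 V → ZMod 2) :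
    (∃ φ : CFIGraph G f ≃g CFIGraph G g, ∀ a : CFIVert G, CFIColor G (φ a) = CFIColor G a) ↔
      ∑ e ∈ G.edgeFinset, f e = ∑ e ∈ G.edgeFinset, g e := by
  have iso_iff :
      (∃ φ : CFIGraph G f ≃g CFIGraph G g, ∀ a, CFIColor G (φ a) = CFIColor G a) ↔
        ∃ y, IsBalancedSplit G (f + g) y :=
    ⟨fun ⟨φ, hφ⟩ => exists_isBalancedSplit_of_iso φ hφ,
      fun ⟨_, hy⟩ => ⟨hy.cfiIso, hy.cfiColor_twist⟩⟩
  rw [iso_iff, ← sub_eq_zero, ZModModule.sub_eq_add, ← sum_add_distrib]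
  exact ⟨fun ⟨_, hy⟩ => hy.sum_edgeFinset_eq_zero, exists_isBalancedSplit hconn⟩
end

section
/- For a connected base graph G and an edge e₀ ∈ E(G), flipping the value of f on e₀ and on any other single edge e₁ lying on a common cycle with e₀ yields an isomorphic colored CFI-graph: if f, g : E(G) → F_2 differ exactly on {e₀, e₁}, then CFI(G,f) ≅ CFI(G,g). -/
open SimpleGraph

variable {V : Type} [Fintype V] [DecidableEq V]

lemma z2_add_self (a : ZMod 2) : a + a = 0 := by revert a; decide

lemma z2_ne (a b : ZMod 2) (h : a ≠ b) : a + b = 1 := by revert a b; decide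

lemma z2_comb (a b c : ZMod 2) : a + b + (b + c) = a + c := by revert a b c; decide

lemma z2_comb2 (a b : ZMod 2) : a + b + a + b = 0 := by revert a b; decide

lemma z2_key (i j s1 s2 u v : ZMod 2) (h : s1 + s2 = u + v) :
    (i + s1) + (j + s2) = v ↔ i + j = u := by revert i j s1 s2 u v; decide

/-- directed-edge count (mod 2) of a walk -/
def dcnt (G : SimpleGraph V) : {x y : V} → G.Walk x y → V → V → ZMod 2
  | _, _, .nil, _, _ => 0
  | x, _, .cons (v := w) _ q, a, b =>
      (if (a = x ∧ b = w) ∨ (a = w ∧ b = x) then 1 else 0) + dcnt G q a b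

lemma dcnt_symm (G : SimpleGraph V) {x y : V} (p : G.Walk x y) (a b : V) :
    dcnt G p a b = dcnt G p b a := by
  induction p with
  | nil => rfl
  | cons h q ih =>
    simp only [dcnt, ih]
    congr 1
    apply if_congr _ rfl rfl
    tauto

lemma dcnt_eq_zero (G : SimpleGraph V) {x y : V} (p : G.Walk x y) {a b : V}
    (hab : ¬ G.Adj a b) : dcnt G p a b = 0 := by
  induction p with
  | nil => rfl
  | cons h q ih =>
    simp only [dcnt, ih, add_zero]
    rw [if_neg]
    rintro (⟨rfl, rfl⟩ | ⟨rfl, rfl⟩)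
    · exact hab h
    · exact hab h.symm

lemma dcnt_sum (G : SimpleGraph V) {x y : V} (p : G.Walk x y) (v : V) :
    ∑ u : V, dcnt G p v u = (if v = x then 1 else 0) + (if v = y then 1 else 0) := by
  induction p with
  | nil =>
    simp only [dcnt, Finset.sum_const_zero]
    split
    · exact (z2_add_self 1).symm
    · simp
  | @cons s t r hadj q ih =>
    have hst : s ≠ t := hadj.ne
    have h1 : ∑ u : V, (if (v = s ∧ u = t) ∨ (v = t ∧ u = s) then (1 : ZMod 2) else 0)
        = (if v = s then 1 else 0) + (if v = t then 1 else 0) := by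
      by_cases hvs : v = s <;> by_cases hvt : v = t
      · exact absurd (hvs.symm.trans hvt) hst
      · subst hvs
        simp [hst, Finset.sum_ite_eq', hvt]
      · subst hvt
        simp [hvs, Finset.sum_ite_eq']
      · simp [hvs, hvt]
    simp only [dcnt, Finset.sum_add_distrib, ih, h1]
    exact z2_comb _ _ _

/-- The CFI twisting map determined by a shift `S`. -/
def cfiMap (G : SimpleGraph V) (S : V → V → ZMod 2)
    (hA : ∀ a b, ¬ G.Adj a b → S a b = 0) (hB : ∀ v, ∑ u : V, S v u = 0) :
    CFIVert G → CFIVert G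
  | .inl ⟨(v, x), hx⟩ => .inl ⟨(v, fun u => x u + S v u), by
      refine ⟨fun u hu => ?_, ?_⟩
      · have h1 : x u = 0 := hx.1 u hu
        have h2 : S v u = 0 := hA v u hu
        show x u + S v u = 0
        rw [h1, h2, add_zero]
      · have h3 : ∑ u : V, x u = 0 := hx.2
        show ∑ u : V, (x u + S v u) = 0
        rw [Finset.sum_add_distrib, h3, hB, add_zero]⟩
  | .inr ⟨(v, u, i), h⟩ => .inr ⟨(v, u, i + S v u), h⟩

theorem cfi_iso_of_shift (G : SimpleGraph V) (f g : Sym2 V → ZMod 2) (S : V → V → ZMod 2)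
    (hA : ∀ a b, ¬ G.Adj a b → S a b = 0) (hB : ∀ v, ∑ u : V, S v u = 0)
    (hC : ∀ a b, G.Adj a b → S a b + S b a = f s(a, b) + g s(a, b)) :
    ∃ φ : CFIGraph G f ≃g CFIGraph G g, ∀ a : CFIVert G, CFIColor G (φ a) = CFIColor G a := by
  set F := cfiMap G S hA hB with hF
  have hinv : ∀ a, F (F a) = a := by
    rintro (⟨⟨v, x⟩, hx⟩ | ⟨⟨v, u, i⟩, h⟩)
    · refine congrArg Sum.inl (Subtype.ext (Prod.ext rfl ?_))
      funext u
      show x u + S v u + S v u = x u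
      rw [add_assoc, z2_add_self, add_zero]
    · refine congrArg Sum.inr (Subtype.ext (Prod.ext rfl (Prod.ext rfl ?_)))
      show i + S v u + S v u = i
      rw [add_assoc, z2_add_self, add_zero]
  have hinj : Function.Injective F := fun a b h => by rw [← hinv a, ← hinv b, h]
  refine ⟨⟨⟨F, F, hinv, hinv⟩, ?_⟩, ?_⟩
  · intro a b
    show (CFIGraph G g).Adj (F a) (F b) ↔ (CFIGraph G f).Adj a b
    simp only [CFIGraph, fromRel_adj]
    refine and_congr hinj.ne_iff ?_
    rcases a with ⟨⟨v, x⟩, hx⟩ | ⟨⟨v, u, i⟩, h⟩ <;> rcases b with ⟨⟨v', x'⟩, hx'⟩ | ⟨⟨v', u', j⟩, h'⟩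
    · rfl
    · show (v = v' ∧ x u' + S v u' = j + S v' u') ∨ False ↔ (v = v' ∧ x u' = j) ∨ False
      simp only [or_false]
      refine and_congr_right fun hv => ?_
      subst hv
      exact add_left_injective (S v u') |>.eq_iff
    · show False ∨ (v' = v ∧ x' u + S v' u = i + S v u) ↔ False ∨ (v' = v ∧ x' u = i)
      simp only [false_or]
      refine and_congr_right fun hv => ?_
      subst hv
      exact add_left_injective (S v' u) |>.eq_iff
    · show ((v' = u ∧ u' = v ∧ (i + S v u) + (j + S v' u') = g s(v, v')) ∨
            (v = u' ∧ u = v' ∧ (j + S v' u') + (i + S v u) = g s(v', v))) ↔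
           ((v' = u ∧ u' = v ∧ i + j = f s(v, v')) ∨
            (v = u' ∧ u = v' ∧ j + i = f s(v', v)))
      refine or_congr ?_ ?_
      · refine and_congr_right fun h1 => and_congr_right fun h2 => ?_
        subst h1; subst h2
        exact z2_key _ _ _ _ _ _ (hC _ _ h)
      · refine and_congr_right fun h1 => and_congr_right fun h2 => ?_
        subst h1; subst h2
        exact z2_key _ _ _ _ _ _ (hC _ _ h')
  · rintro (⟨⟨v, x⟩, hx⟩ | ⟨⟨v, u, i⟩, h⟩) <;> rfl

lemma ind_pair {a b c d : V} (hab : a ≠ b) :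
    (if a = c ∧ b = d then (1 : ZMod 2) else 0) + (if b = c ∧ a = d then 1 else 0)
      = if s(a, b) = s(c, d) then 1 else 0 := by
  by_cases h1 : a = c ∧ b = d <;> by_cases h2 : b = c ∧ a = d
  · exact absurd (h1.1.trans h2.1.symm) hab
  · rw [if_pos h1, if_neg h2, if_pos (Sym2.eq_iff.mpr (Or.inl h1)), add_zero]
  · rw [if_neg h1, if_pos h2, if_pos (Sym2.eq_iff.mpr (Or.inr ⟨h2.2, h2.1⟩)), zero_add]
  · rw [if_neg h1, if_neg h2, if_neg, add_zero]
    intro hs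
    rcases Sym2.eq_iff.mp hs with h | ⟨ha, hb⟩
    · exact h1 h
    · exact h2 ⟨hb, ha⟩

/-- Twists move along cycles: if `f` and `g` differ exactly on two edges `e₀ ≠ e₁` lying on
a common cycle of the connected base graph `G`, then `CFI(G, f)` and `CFI(G, g)` are
isomorphic as colored graphs. -/
theorem stmt10 (G : SimpleGraph V) (hconn : G.Connected) (f g : Sym2 V → ZMod 2)
    (e₀ e₁ : Sym2 V) (he₀ : e₀ ∈ G.edgeSet) (he₁ : e₁ ∈ G.edgeSet) (hne : e₀ ≠ e₁)
    (hd₀ : f e₀ ≠ g e₀) (hd₁ : f e₁ ≠ g e₁)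
    (hsame : ∀ e : Sym2 V, e ≠ e₀ → e ≠ e₁ → f e = g e)
    (hcyc : ∃ (v : V) (c : G.Walk v v), c.IsCycle ∧ e₀ ∈ c.edges ∧ e₁ ∈ c.edges) :
    ∃ φ : CFIGraph G f ≃g CFIGraph G g, ∀ a : CFIVert G, CFIColor G (φ a) = CFIColor G a := by
  obtain ⟨x₀, w₀, rfl⟩ : ∃ a b, e₀ = s(a, b) := by
    induction e₀ using Sym2.ind with | _ a b => exact ⟨a, b, rfl⟩
  obtain ⟨x₁, w₁, rfl⟩ : ∃ a b, e₁ = s(a, b) := by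
    induction e₁ using Sym2.ind with | _ a b => exact ⟨a, b, rfl⟩
  rw [mem_edgeSet] at he₀ he₁
  obtain ⟨p⟩ := hconn.preconnected x₀ x₁
  apply cfi_iso_of_shift G f g (fun a b => dcnt G p a b +
      (if a = x₀ ∧ b = w₀ then 1 else 0) + (if a = x₁ ∧ b = w₁ then 1 else 0))
  · intro a b hab
    rw [dcnt_eq_zero G p hab, if_neg, if_neg, add_zero, add_zero]
    · rintro ⟨rfl, rfl⟩; exact hab he₁
    · rintro ⟨rfl, rfl⟩; exact hab he₀
  · intro v
    have h0 : ∑ u : V, (if v = x₀ ∧ u = w₀ then (1 : ZMod 2) else 0)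
        = if v = x₀ then 1 else 0 := by
      by_cases hv : v = x₀ <;> simp [hv, Finset.sum_ite_eq']
    have h1 : ∑ u : V, (if v = x₁ ∧ u = w₁ then (1 : ZMod 2) else 0)
        = if v = x₁ then 1 else 0 := by
      by_cases hv : v = x₁ <;> simp [hv, Finset.sum_ite_eq']
    simp only [Finset.sum_add_distrib, h0, h1, dcnt_sum]
    exact z2_comb2 _ _
  · intro a b hab
    have hre : ∀ d1 d2 i0 i0' i1 i1' : ZMod 2, d1 = d2 →
        (d1 + i0 + i1) + (d2 + i0' + i1') = (i0 + i0') + (i1 + i1') := by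
      intro d1 d2 i0 i0' i1 i1' hd
      subst hd
      ring_nf
      rw [show (2 : ZMod 2) = 0 by decide]
      ring
    rw [hre _ _ _ _ _ _ (dcnt_symm G p a b), ind_pair hab.ne, ind_pair hab.ne]
    by_cases h0 : s(a, b) = s(x₀, w₀) <;> by_cases h1 : s(a, b) = s(x₁, w₁)
    · exact absurd (h0.symm.trans h1) hne
    · rw [if_pos h0, if_neg h1, add_zero, h0]
      exact (z2_ne _ _ hd₀).symm
    · rw [if_neg h0, if_pos h1, zero_add, h1]
      exact (z2_ne _ _ hd₁).symm
    · rw [if_neg h0, if_neg h1, add_zero, hsame _ h0 h1, z2_add_self]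
end
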